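/- arXiv:1908.06461 — 3 statements merged into one kernel-verified Lean document; each statement's English description precedes it below -/
import Mathlib

section
/- For every integer n ≥ 0 and real x, the identity ∑_{i=0}^{n-1} 16^{n-i-1}·2^i·C(2^i x + 2^i − 1, 2) = ((7x²+1)/112)·2^{4n} − ((x+1)²/16)·2^{3n} + ((x+1)/8)·2^{2n} − (1/14)·2^{n} holds, where C(y,2) = y(y-1)/2. -/
/-- Observation A.2 (obs:gi). -/
theorem stmt3 (n : ℕ) (x : ℝ) :
    ∑ i ∈ Finset.range n,
        (16 : ℝ) ^ (n - i - 1) * 2 ^ i *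
          ((2 ^ i * x + 2 ^ i - 1) * (2 ^ i * x + 2 ^ i - 1 - 1) / 2)
      = ((7 * x ^ 2 + 1) / 112) * 2 ^ (4 * n) - ((x + 1) ^ 2 / 16) * 2 ^ (3 * n)
        + ((x + 1) / 8) * 2 ^ (2 * n) - (1 / 14) * 2 ^ n := by
  induction n with
  | zero => simp; ring
  | succ n ih =>
    rw [Finset.sum_range_succ]
    have h1 : ∀ i ∈ Finset.range n,
        (16 : ℝ) ^ (n + 1 - i - 1) * 2 ^ i *
          ((2 ^ i * x + 2 ^ i - 1) * (2 ^ i * x + 2 ^ i - 1 - 1) / 2)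
        = 16 * ((16 : ℝ) ^ (n - i - 1) * 2 ^ i *
          ((2 ^ i * x + 2 ^ i - 1) * (2 ^ i * x + 2 ^ i - 1 - 1) / 2)) := by
      intro i hi
      rw [Finset.mem_range] at hi
      have : n + 1 - i - 1 = (n - i - 1) + 1 := by omega
      rw [this, pow_succ]
      ring
    rw [Finset.sum_congr rfl h1, ← Finset.mul_sum, ih]
    have h2 : n + 1 - n - 1 = 0 := by omega
    rw [h2]
    have e4 : (2:ℝ) ^ (4 * (n+1)) = 16 * 2 ^ (4*n) := by rw [show 4*(n+1) = 4*n+4 by ring]; ring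
    have e3 : (2:ℝ) ^ (3 * (n+1)) = 8 * 2 ^ (3*n) := by rw [show 3*(n+1) = 3*n+3 by ring]; ring
    have e2 : (2:ℝ) ^ (2 * (n+1)) = 4 * 2 ^ (2*n) := by rw [show 2*(n+1) = 2*n+2 by ring]; ring
    have e1 : (2:ℝ) ^ (n+1) = 2 * 2 ^ n := by ring
    have e24 : (2:ℝ) ^ (4*n) = (2^n)^4 := by rw [mul_comm, pow_mul]
    have e23 : (2:ℝ) ^ (3*n) = (2^n)^3 := by rw [mul_comm, pow_mul]
    have e22 : (2:ℝ) ^ (2*n) = (2^n)^2 := by rw [mul_comm, pow_mul]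
    rw [e4, e3, e2, e1, e24, e23, e22]
    ring
end

section
/- For every integer n ≥ 0 and real x, the identity ∑_{i=0}^{n−1} 16^{n−i−1} ∑_{j=0}^{2^i−1} C(2^i x + j, 2) = ((21x²−7x+1)/336)·2^{4n} − ((3(x²+x)+1)/48)·2^{3n} + ((2x+1)/24)·2^{2n} − (1/42)·2^{n} holds, where C(y,2) = y(y−1)/2. -/
lemma stmt5_inner_sum (m : ℕ) (y : ℝ) :
    ∑ j ∈ Finset.range m, ((y + (j : ℝ)) * (y + (j : ℝ) - 1) / 2)
    = ((m : ℝ) * y ^ 2 + (2 * y - 1) * m * (m - 1) / 2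
        + m * (m - 1) * (2 * m - 1) / 6 - m * y) / 2 := by
  induction m with
  | zero => simp
  | succ k ih =>
    rw [Finset.sum_range_succ, ih]
    push_cast
    ring

/-- Observation A.4 (obs:Sum_hij). -/
theorem stmt5 (n : ℕ) (x : ℝ) :
    ∑ i ∈ Finset.range n, (16 : ℝ) ^ (n - i - 1) *
        ∑ j ∈ Finset.range (2 ^ i),
          ((2 ^ i * x + (j : ℝ)) * (2 ^ i * x + (j : ℝ) - 1) / 2)
      = ((21 * x ^ 2 - 7 * x + 1) / 336) * 2 ^ (4 * n)
        - ((3 * (x ^ 2 + x) + 1) / 48) * 2 ^ (3 * n)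
        + ((2 * x + 1) / 24) * 2 ^ (2 * n) - (1 / 42) * 2 ^ n := by
  induction n with
  | zero => simp only [Finset.range_zero, Finset.sum_empty, Nat.mul_zero, pow_zero]; ring
  | succ k ih =>
    rw [Finset.sum_range_succ]
    have hcongr : ∀ i ∈ Finset.range k, (16 : ℝ) ^ (k + 1 - i - 1) *
        ∑ j ∈ Finset.range (2 ^ i),
          ((2 ^ i * x + (j : ℝ)) * (2 ^ i * x + (j : ℝ) - 1) / 2)
        = 16 * ((16 : ℝ) ^ (k - i - 1) *
        ∑ j ∈ Finset.range (2 ^ i),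
          ((2 ^ i * x + (j : ℝ)) * (2 ^ i * x + (j : ℝ) - 1) / 2)) := by
      intro i hi
      rw [Finset.mem_range] at hi
      have : k + 1 - i - 1 = (k - i - 1) + 1 := by omega
      rw [this, pow_succ]
      ring
    rw [Finset.sum_congr rfl hcongr, ← Finset.mul_sum, ih,
      stmt5_inner_sum (2 ^ k) ((2:ℝ) ^ k * x)]
    have h1 : k + 1 - k - 1 = 0 := by omega
    have hc : ((2 ^ k : ℕ) : ℝ) = (2 : ℝ) ^ k := by push_cast; ring
    rw [h1, hc]
    have e4 : (2 : ℝ) ^ (4 * (k + 1)) = 16 * 2 ^ (4 * k) := by ring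
    have e3 : (2 : ℝ) ^ (3 * (k + 1)) = 8 * 2 ^ (3 * k) := by ring
    have e2 : (2 : ℝ) ^ (2 * (k + 1)) = 4 * 2 ^ (2 * k) := by ring
    have e40 : (2 : ℝ) ^ (4 * k) = ((2:ℝ) ^ k) ^ 4 := by rw [← pow_mul]; ring_nf
    have e30 : (2 : ℝ) ^ (3 * k) = ((2:ℝ) ^ k) ^ 3 := by rw [← pow_mul]; ring_nf
    have e20 : (2 : ℝ) ^ (2 * k) = ((2:ℝ) ^ k) ^ 2 := by rw [← pow_mul]; ring_nf
    rw [e4, e3, e2, pow_succ, e40, e30, e20]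
    ring
end

section
/- Let D be the bipartite straight-line drawing on an (n,n)-double-chain where vertices of the upper chain and lower chain are each labeled 1..n left to right, edges join vertices of different chains, and two edges (i,j) and (k,l) (upper index first) cross if and only if (i−k)(j−l) < 0 or (i = k is false and j = l is false and the order reverses). Color edge (i,j) blue if i < j, red if i > j, and arbitrarily if i = j. Then the number of monochromatic crossings is at most (1/3 + o(1)) times the total number of crossings; i.e., the ratio tends to at most 1/3. -/
/-!
Order each crossing so that its first edge has the smaller upper label; this halves both counts.
An oriented crossing `((i, j), (k, l))` with four distinct labels is blue–blue only if
`i < k < l < j` and red–red only if `l < j < i < k`, and reversing all labels matches the red–red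
pattern with the blue–blue one. Every set `{a < b < c < d}` of labels carries one crossing of each
pattern, but six oriented crossings (one per choice of the two upper labels), so at most a third of
the oriented crossings with four distinct labels are monochromatic. The remaining pairs of edges
number `O(n³)`, whereas splitting both chains in the middle already yields `n⁴ / 64` oriented
crossings.
-/

open Finset

theorem card_filter_or_swap {α : Type*} [Fintype α] [DecidableEq α] (A q : α × α → Prop)
    [DecidablePred A] [DecidablePred q] (hA : ∀ p, A p → ¬A p.swap) (hq : ∀ p, q p → q p.swap) :
    #{p | (A p ∨ A p.swap) ∧ q p} = 2 * #{p | A p ∧ q p} := by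
  have hswap : #{p | A p.swap ∧ q p} = #{p | A p ∧ q p} :=
    card_nbij' Prod.swap Prod.swap (fun p hp => by simp_all) (fun p hp => by simp_all)
      (fun p _ => p.swap_swap) (fun p _ => p.swap_swap)
  rw [filter_congr (q := fun p => (A p ∧ q p) ∨ (A p.swap ∧ q p)) (fun _ _ => or_and_right),
    filter_or, card_union_of_disjoint, hswap, two_mul]
  exact disjoint_filter.2 fun p _ h h' => hA p h.1 h'.1

namespace DoubleChain

variable {n : ℕ}

abbrev EdgePair (n : ℕ) := (Fin n × Fin n) × (Fin n × Fin n)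

def orientedCrossings (n : ℕ) : Finset (EdgePair n) :=
  {p | p.1.1 < p.2.1 ∧ p.2.2 ≤ p.1.2}

def crossings (n : ℕ) : Finset (EdgePair n) :=
  {p | (p.1.1 < p.2.1 ∧ p.2.2 ≤ p.1.2) ∨ (p.2.1 < p.1.1 ∧ p.1.2 ≤ p.2.2)}

def monochromaticCrossings (χ : Fin n × Fin n → Bool) : Finset (EdgePair n) :=
  {p | ((p.1.1 < p.2.1 ∧ p.2.2 ≤ p.1.2) ∨ (p.2.1 < p.1.1 ∧ p.1.2 ≤ p.2.2)) ∧ χ p.1 = χ p.2}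

theorem card_crossings : #(crossings n) = 2 * #(orientedCrossings n) := by
  have := card_filter_or_swap (fun p : EdgePair n => p.1.1 < p.2.1 ∧ p.2.2 ≤ p.1.2) (fun _ => True)
    (fun p h h' => h.1.not_gt h'.1) (fun _ _ => trivial)
  simpa [crossings, orientedCrossings] using this

theorem card_monochromaticCrossings (χ : Fin n × Fin n → Bool) :
    #(monochromaticCrossings χ)
      = 2 * #((orientedCrossings n).filter (fun p => χ p.1 = χ p.2)) := by
  rw [orientedCrossings, filter_filter]
  exact card_filter_or_swap (fun p : EdgePair n => p.1.1 < p.2.1 ∧ p.2.2 ≤ p.1.2)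
    (fun p => χ p.1 = χ p.2) (fun p h h' => h.1.not_gt h'.1) (fun _ h => h.symm)

def blueQuadruples (n : ℕ) : Finset (EdgePair n) :=
  {p | p.1.1 < p.2.1 ∧ p.2.1 < p.2.2 ∧ p.2.2 < p.1.2}

def redQuadruples (n : ℕ) : Finset (EdgePair n) :=
  {p | p.2.2 < p.1.2 ∧ p.1.2 < p.1.1 ∧ p.1.1 < p.2.1}

def degeneratePairs (n : ℕ) : Finset (EdgePair n) :=
  {p | p.1.1 = p.1.2 ∨ p.2.1 = p.2.2 ∨ p.2.2 = p.1.2}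

theorem card_degeneratePairs_le : #(degeneratePairs n) ≤ 3 * n ^ 3 := by
  let build : Fin 3 × Fin n × Fin n × Fin n → EdgePair n :=
    fun x => ![((x.2.1, x.2.1), x.2.2), ((x.2.1, x.2.2.1), (x.2.2.2, x.2.2.2)),
      ((x.2.1, x.2.2.1), (x.2.2.2, x.2.2.1))] x.1
  calc #(degeneratePairs n) ≤ #(univ : Finset (Fin 3 × Fin n × Fin n × Fin n)) := by
        refine card_le_card_of_surjOn build fun p hp => ?_
        simp only [degeneratePairs, coe_filter, mem_univ, true_and, Set.mem_ofPred_eq] at hp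
        rcases hp with h | h | h
        · exact ⟨(0, p.1.1, p.2), by simp [build, Prod.ext_iff, h]⟩
        · exact ⟨(1, p.1.1, p.1.2, p.2.1), by simp [build, Prod.ext_iff, h]⟩
        · exact ⟨(2, p.1.1, p.1.2, p.2.1), by simp [build, Prod.ext_iff, h]⟩
    _ = 3 * n ^ 3 := by simp [pow_succ, mul_assoc]

theorem card_redQuadruples : #(redQuadruples n) = #(blueQuadruples n) := by
  let reverse : EdgePair n → EdgePair n :=
    fun p => ((p.2.1.rev, p.2.2.rev), (p.1.1.rev, p.1.2.rev))
  refine card_nbij' reverse reverse ?_ ?_ (fun p _ => by simp [reverse])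
    (fun p _ => by simp [reverse])
  all_goals
    intro p hp
    simp only [blueQuadruples, redQuadruples, coe_filter, mem_univ, true_and,
      Set.mem_ofPred_eq, Fin.rev_lt_rev, reverse] at hp ⊢
    tauto

/-- For `a < b < c < d` encoded as `((a, d), (b, c))`, the six oriented crossings with label set
`{a, b, c, d}`, one for each choice of the two upper labels. -/
def quadrupleCrossings (q : EdgePair n) : Fin 6 → EdgePair n :=
  ![((q.1.1, q.1.2), (q.2.1, q.2.2)), ((q.1.1, q.1.2), (q.2.2, q.2.1)),
    ((q.1.1, q.2.2), (q.1.2, q.2.1)), ((q.2.1, q.1.2), (q.2.2, q.1.1)),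
    ((q.2.1, q.2.2), (q.1.2, q.1.1)), ((q.2.2, q.2.1), (q.1.2, q.1.1))]

theorem six_mul_card_blueQuadruples_le : 6 * #(blueQuadruples n) ≤ #(orientedCrossings n) := by
  calc 6 * #(blueQuadruples n) = #(blueQuadruples n ×ˢ (univ : Finset (Fin 6))) := by
        rw [card_product, card_univ, Fintype.card_fin, mul_comm]
    _ ≤ #(orientedCrossings n) := by
      refine card_le_card_of_injOn (fun x => quadrupleCrossings x.1 x.2) ?_ ?_
      · rintro ⟨⟨⟨a, d⟩, b, c⟩, t⟩ hx
        simp only [blueQuadruples, coe_product, coe_filter, mem_univ, true_and, Set.mem_prod,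
          Set.mem_ofPred_eq, coe_univ, Set.mem_univ, and_true, Fin.lt_def] at hx
        simp only [orientedCrossings, coe_filter, mem_univ, true_and, Set.mem_ofPred_eq]
        fin_cases t <;> simp [quadrupleCrossings] <;> omega
      · rintro ⟨⟨⟨a, d⟩, b, c⟩, t⟩ hx ⟨⟨⟨a', d'⟩, b', c'⟩, t'⟩ hy hxy
        simp only [blueQuadruples, coe_product, coe_filter, mem_univ, true_and, Set.mem_prod,
          Set.mem_ofPred_eq, coe_univ, Set.mem_univ, and_true, Fin.lt_def] at hx hy
        fin_cases t <;> fin_cases t' <;>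
          simp [quadrupleCrossings, Prod.ext_iff, Fin.ext_iff] at hxy ⊢ <;> omega

theorem pow_four_le_card_orientedCrossings (hn : 2 ≤ n) : n ^ 4 ≤ 64 * #(orientedCrossings n) := by
  set h := n / 2
  let a : Fin n := ⟨h, by omega⟩
  have hsub : (Iio a ×ˢ Ici a) ×ˢ (Ici a ×ˢ Iio a) ⊆ orientedCrossings n := by
    intro p hp
    simp only [mem_product, mem_Iio, mem_Ici] at hp
    simp only [orientedCrossings, mem_filter, mem_univ, true_and]
    exact ⟨hp.1.1.trans_le hp.2.1, (hp.2.2.trans_le hp.1.2).le⟩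
  have hcard : #((Iio a ×ˢ Ici a) ×ˢ (Ici a ×ˢ Iio a)) = h * (n - h) * ((n - h) * h) := by
    simp only [card_product, Fin.card_Iio, Fin.card_Ici, a]
  calc n ^ 4 ≤ (4 * h) * (2 * (n - h)) * ((2 * (n - h)) * (4 * h)) := by
        rw [pow_succ, pow_succ, pow_two, mul_assoc (n * n)]
        have h4 : n ≤ 4 * h := by omega
        have h2 : n ≤ 2 * (n - h) := by omega
        gcongr
    _ = 64 * (h * (n - h) * ((n - h) * h)) := by ring
    _ ≤ 64 * #(orientedCrossings n) := by rw [← hcard]; gcongr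

theorem filter_orientedCrossings_subset (χ : Fin n × Fin n → Bool)
    (hblue : ∀ e : Fin n × Fin n, (e.1 : ℕ) < (e.2 : ℕ) → χ e = true)
    (hred : ∀ e : Fin n × Fin n, (e.2 : ℕ) < (e.1 : ℕ) → χ e = false) :
    (orientedCrossings n).filter (fun p => χ p.1 = χ p.2)
      ⊆ blueQuadruples n ∪ redQuadruples n ∪ degeneratePairs n := by
  intro p hp
  simp only [orientedCrossings, mem_filter, mem_univ, true_and] at hp
  obtain ⟨⟨hik, hlj⟩, hχ⟩ := hp
  have hcolor : ¬(p.1.1 < p.1.2 ∧ p.2.2 < p.2.1) ∧ ¬(p.1.2 < p.1.1 ∧ p.2.1 < p.2.2) := by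
    constructor <;> rintro ⟨h1, h2⟩
    · simp [hblue _ h1, hred _ h2] at hχ
    · simp [hred _ h1, hblue _ h2] at hχ
  simp only [blueQuadruples, redQuadruples, degeneratePairs, mem_union, mem_filter, mem_univ,
    true_and]
  omega

theorem three_mul_card_monochromaticCrossings_le (χ : Fin n × Fin n → Bool)
    (hblue : ∀ e : Fin n × Fin n, (e.1 : ℕ) < (e.2 : ℕ) → χ e = true)
    (hred : ∀ e : Fin n × Fin n, (e.2 : ℕ) < (e.1 : ℕ) → χ e = false) :
    3 * #(monochromaticCrossings χ) ≤ #(crossings n) + 18 * n ^ 3 := by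
  have hmono : #((orientedCrossings n).filter (fun p => χ p.1 = χ p.2))
      ≤ #(blueQuadruples n) + #(redQuadruples n) + #(degeneratePairs n) :=
    (card_le_card (filter_orientedCrossings_subset χ hblue hred)).trans
      ((card_union_le _ _).trans (Nat.add_le_add_right (card_union_le _ _) _))
  rw [card_redQuadruples] at hmono
  have := six_mul_card_blueQuadruples_le (n := n)
  have := card_degeneratePairs_le (n := n)
  rw [card_monochromaticCrossings, card_crossings]
  omega

end DoubleChain

open DoubleChain

/-- Double-chain bipartite drawing: with edges `(i,j)` (upper `i`, lower `j`), where
edges `(i,j)`, `(k,l)` cross iff `(i<k ∧ l≤j) ∨ (k<i ∧ j≤l)`, and any coloring that is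
blue when `i<j` and red when `i>j`, the number of monochromatic crossings is at most
`(1/3 + o(1))` times the total number of crossings. -/
theorem stmt10 :
    ∀ ε : ℝ, 0 < ε → ∃ N : ℕ, ∀ n : ℕ, N ≤ n → ∀ χ : Fin n × Fin n → Bool,
      (∀ e : Fin n × Fin n, (e.1 : ℕ) < (e.2 : ℕ) → χ e = true) →
      (∀ e : Fin n × Fin n, (e.2 : ℕ) < (e.1 : ℕ) → χ e = false) →
      (((Finset.univ : Finset ((Fin n × Fin n) × (Fin n × Fin n))).filter
          (fun p => ((p.1.1 < p.2.1 ∧ p.2.2 ≤ p.1.2) ∨ (p.2.1 < p.1.1 ∧ p.1.2 ≤ p.2.2)) ∧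
            χ p.1 = χ p.2)).card : ℝ)
        ≤ (1 / 3 + ε) *
          (((Finset.univ : Finset ((Fin n × Fin n) × (Fin n × Fin n))).filter
              (fun p => (p.1.1 < p.2.1 ∧ p.2.2 ≤ p.1.2) ∨
                (p.2.1 < p.1.1 ∧ p.1.2 ≤ p.2.2))).card : ℝ) := by
  intro ε hε
  obtain ⟨N, hN⟩ := exists_nat_ge (192 / ε)
  refine ⟨N + 2, fun n hn χ hblue hred => ?_⟩
  change (#(monochromaticCrossings χ) : ℝ) ≤ (1 / 3 + ε) * #(crossings n)
  have hmono : 3 * (#(monochromaticCrossings χ) : ℝ) ≤ #(crossings n) + 18 * (n : ℝ) ^ 3 := by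
    exact_mod_cast three_mul_card_monochromaticCrossings_le χ hblue hred
  have hcross : (n : ℝ) ^ 4 ≤ 32 * #(crossings n) := by
    have := pow_four_le_card_orientedCrossings (n := n) (by omega)
    rw [card_crossings]
    exact_mod_cast (by omega : n ^ 4 ≤ 32 * (2 * #(orientedCrossings n)))
  have hεn : 192 ≤ ε * n := by
    rw [div_le_iff₀ hε] at hN
    nlinarith [(Nat.cast_le (α := ℝ)).2 (show N ≤ n by omega)]
  have herr : 6 * (n : ℝ) ^ 3 ≤ ε * #(crossings n) := by
    nlinarith [mul_le_mul_of_nonneg_right hεn (by positivity : (0 : ℝ) ≤ (n : ℝ) ^ 3),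
      mul_le_mul_of_nonneg_left hcross hε.le]
  linarith
end
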